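/- The finitary language L = {cⁿ a r^{n−2} | n ≥ 2} over the visibly pushdown alphabet with c a call, r a return, and a an internal action, is not accepted by any deterministic visibly one-counter automaton (DV1CA). -/

import Mathlib

/-!  Common definitions: pushdown machines, ω-pushdown automata, pushdown games,
pushdown strategies (deterministic pushdown automata with output), and
alternating two-way / nondeterministic one-way parity tree automata. -/

/-- Kinds of letters in a visibly pushdown alphabet. -/
inductive VKind : Type
  | call | ret | intern

/-- A pushdown machine over states `Q`, input alphabet `A` and stack alphabet `Γ`.
The initial stack symbol `⊥` is implicit: a stack content `γ⊥ ∈ Γ*⊥` is modeled by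
the list `γ` of symbols above `⊥`, and the top-of-stack argument `none` of the
transition function represents `⊥` (i.e. the empty list).  A transition replaces the
topmost symbol by the returned word (respectively pushes the returned word on top of
`⊥`), so `⊥` can neither be pushed onto nor removed from the stack.  The input
letter `none` is `ε`. -/
structure PDM (Q A Γ : Type) where
  δ : Q → Option A → Option Γ → Set (Q × List Γ)
  qin : Q

namespace PDM

variable {Q A Γ : Type}

/-- A configuration: a state together with the stack content (above `⊥`). -/
abbrev Conf (Q Γ : Type) : Type := Q × List Γ

/-- Stack height of a configuration `(q,γ⊥)`: the length `|γ⊥|` (the `⊥` counts). -/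
def sh (c : Conf Q Γ) : ℕ := c.2.length + 1

/-- One transition step of the machine, labeled by `none` (an `ε`-move) or `some a`. -/
def Step (M : PDM Q A Γ) (c : Conf Q Γ) (a : Option A) (c' : Conf Q Γ) : Prop :=
  match c.2 with
  | [] => c' ∈ M.δ c.1 a none
  | t :: rest => ∃ γ' : List Γ, (c'.1, γ') ∈ M.δ c.1 a (some t) ∧ c'.2 = γ' ++ rest

/-- Determinism: `|δ(q,a,A)| + |δ(q,ε,A)| ≤ 1` for all `q ∈ Q`, `a ∈ A`, `A ∈ Γ⊥`. -/
def Deterministic (M : PDM Q A Γ) : Prop :=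
  ∀ (q : Q) (t : Option Γ),
    (∀ a : Option A, (M.δ q a t).Subsingleton) ∧
    (∀ a : A, (M.δ q (some a) t).Nonempty → M.δ q none t = ∅)

/-- A realtime machine has no `ε`-transitions. -/
def Realtime (M : PDM Q A Γ) : Prop := ∀ q t, M.δ q none t = ∅

/-- Normal form: every transition is a push of exactly one symbol (`δ(q,a,A)=(q',A'A)`),
a skip (`δ(q,a,A)=(q',A)`), or a pop (`δ(q,a,A)=(q',ε)`). -/
def NormalForm (M : PDM Q A Γ) : Prop :=
  ∀ q a t p, p ∈ M.δ q a t →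
    p.2 = ([] : List Γ) ∨ p.2 = t.toList ∨ ∃ B : Γ, p.2 = B :: t.toList

/-- A blind one-counter machine: every transition enabled with empty stack (counter `0`)
is also enabled, with the same state change and counter effect, with nonempty stack:
`δ(q,a,⊥) ∋ (q',Aⁿ⊥)` implies `δ(q,a,A) ∋ (q',AⁿA)`. -/
def Blind (M : PDM Q A Unit) : Prop :=
  ∀ (q : Q) (a : Option A) (p : Q × List Unit),
    p ∈ M.δ q a none → (p.1, p.2 ++ [()]) ∈ M.δ q a (some ())

/-- A visibly pushdown machine w.r.t. the partition `kind` of the input alphabet into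
calls, returns and internal actions: no `ε`-transitions; on a call exactly one symbol is
pushed and the transition does not depend on the top of the stack; on a return the top
symbol is popped (`⊥` is left unchanged); on an internal action the stack is unchanged
and the transition does not depend on the top of the stack. -/
def Visibly (M : PDM Q A Γ) (kind : A → VKind) : Prop :=
  (∀ q t, M.δ q none t = ∅) ∧
  (∀ q a, kind a = VKind.call → ∃ mv : Set (Q × Γ),
      ∀ t, M.δ q (some a) t = (fun p : Q × Γ => (p.1, p.2 :: t.toList)) '' mv) ∧
  (∀ q a t, kind a = VKind.ret → ∀ p ∈ M.δ q (some a) t, p.2 = ([] : List Γ)) ∧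
  (∀ q a, kind a = VKind.intern → ∃ mv : Set Q,
      ∀ t, M.δ q (some a) t = (fun q' : Q => (q', t.toList)) '' mv)

/-- `ρ` is an infinite run of `M` on the ω-word `α`: it starts in the initial
configuration `(q_in,⊥)`, each step follows `δ` on a letter or on `ε`, and the
consumed letters (the non-`ε` labels, in order) form exactly `α`. -/
def IsRunOn (M : PDM Q A Γ) (ρ : ℕ → Conf Q Γ) (α : ℕ → A) : Prop :=
  ρ 0 = (M.qin, []) ∧
  ∃ u : ℕ → Option A,
    (∀ n : ℕ, M.Step (ρ n) (u n) (ρ (n + 1))) ∧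
    ∃ φ : ℕ → ℕ, StrictMono φ ∧ (∀ k : ℕ, u (φ k) = some (α k)) ∧
      ∀ n : ℕ, (u n).isSome = true → ∃ k : ℕ, φ k = n

/-- `Inf(ρ)`: states occurring infinitely often in `ρ`. -/
def InfOcc (ρ : ℕ → Conf Q Γ) : Set Q := {q | ∀ n : ℕ, ∃ m, n ≤ m ∧ (ρ m).1 = q}

/-- `Steps_ρ = {n | ∀ m ≥ n, sh(ρ(m)) ≥ sh(ρ(n))}`. -/
def StepsSet (ρ : ℕ → Conf Q Γ) : Set ℕ := {n | ∀ m : ℕ, n ≤ m → sh (ρ n) ≤ sh (ρ m)}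

/-- States occurring infinitely often in the subsequence `ρ|_{Steps_ρ}`. -/
def InfOccStair (ρ : ℕ → Conf Q Γ) : Set Q :=
  {q | ∀ n : ℕ, ∃ m, n ≤ m ∧ m ∈ StepsSet ρ ∧ (ρ m).1 = q}

/-- Parity condition: the minimal priority seen infinitely often is even. -/
def ParityAcc (col : Q → ℕ) (ρ : ℕ → Conf Q Γ) : Prop :=
  Even (sInf (col '' InfOcc ρ))

/-- Stair parity condition: the minimal priority seen infinitely often in
`ρ|_{Steps_ρ}` is even. -/
def StairParityAcc (col : Q → ℕ) (ρ : ℕ → Conf Q Γ) : Prop :=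
  Even (sInf (col '' InfOccStair ρ))

/-- The ω-language of the parity pushdown automaton `(M, col)`. -/
def ParityLang (M : PDM Q A Γ) (col : Q → ℕ) : Set (ℕ → A) :=
  {α | ∃ ρ : ℕ → Conf Q Γ, M.IsRunOn ρ α ∧ ParityAcc col ρ}

/-- The ω-language of the stair parity pushdown automaton `(M, col)`. -/
def StairParityLang (M : PDM Q A Γ) (col : Q → ℕ) : Set (ℕ → A) :=
  {α | ∃ ρ : ℕ → Conf Q Γ, M.IsRunOn ρ α ∧ StairParityAcc col ρ}

/-- Acceptance of a finite word by the pushdown automaton `(M, F)`: some finite run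
from the initial configuration consuming exactly `w` ends in a final state. -/
def AcceptsFin (M : PDM Q A Γ) (F : Set Q) (w : List A) : Prop :=
  ∃ (m : ℕ) (ρ : ℕ → Conf Q Γ) (u : ℕ → Option A),
    ρ 0 = (M.qin, []) ∧ (∀ k < m, M.Step (ρ k) (u k) (ρ (k + 1))) ∧
    (List.ofFn (fun k : Fin m => u k.1)).reduceOption = w ∧ (ρ m).1 ∈ F

/-- An infinite play of the pushdown game: a sequence of configurations starting in the
initial configuration, together with the labels of the chosen transitions. -/
def IsPlay (M : PDM Q A Γ) (conf : ℕ → Conf Q Γ) (lab : ℕ → Option A) : Prop :=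
  conf 0 = (M.qin, []) ∧ ∀ n : ℕ, M.Step (conf n) (lab n) (conf (n + 1))

/-- Player `i` has a winning strategy (as an abstract function from histories of moves
to moves) in the pushdown game on `M` given by the partition `owner` of the states,
where Player 0 wins an infinite play `conf` iff `W conf` holds: the strategy always
proposes an enabled transition at any reachable consistent position owned by Player `i`,
and every infinite play consistent with it is won by Player `i`. -/
def HasAbstractWinning (M : PDM Q A Γ) (owner : Q → Fin 2)
    (W : (ℕ → Conf Q Γ) → Prop) (i : Fin 2) : Prop :=
  ∃ σ : List (Option A) → Option A,
    (∀ (n : ℕ) (conf : ℕ → Conf Q Γ) (lab : ℕ → Option A),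
      conf 0 = (M.qin, []) →
      (∀ k < n, M.Step (conf k) (lab k) (conf (k + 1))) →
      (∀ k < n, owner (conf k).1 = i → lab k = σ (List.ofFn (fun j : Fin k => lab j.1))) →
      owner (conf n).1 = i →
      ∃ c' : Conf Q Γ, M.Step (conf n) (σ (List.ofFn (fun j : Fin n => lab j.1))) c') ∧
    (∀ (conf : ℕ → Conf Q Γ) (lab : ℕ → Option A),
      IsPlay M conf lab →
      (∀ n : ℕ, owner (conf n).1 = i → lab n = σ (List.ofFn (fun j : Fin n => lab j.1))) →
      (W conf ↔ i = 0))

/-- The pushdown game on `M` with partition `owner` and winning condition `W`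
(for Player 0) is determined. -/
def Determined (M : PDM Q A Γ) (owner : Q → Fin 2)
    (W : (ℕ → Conf Q Γ) → Prop) : Prop :=
  ∃ i : Fin 2, HasAbstractWinning M owner W i

end PDM

/-- A deterministic pushdown automaton with output (a pushdown strategy): it reads the
opponent's moves and outputs the player's own next choices.  `δ s inp t = some (s', γ', out)`
means: in state `s` with top of stack `t` (`none` = `⊥`), on input `inp` (`none` = `ε`)
the machine moves to state `s'`, replaces the top of the stack by `γ'` and outputs `out`
(`none` = `ε`-output).  Partiality of `δ` gives determinism per input letter. -/
structure StratPDA (A Γ' : Type) where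
  S : Type
  sin : S
  δ : S → Option A → Option Γ' → Option (S × List Γ' × Option A)

namespace StratPDA

variable {Q A Γ Γ' : Type}

/-- Determinism: if an `ε`-input transition is present then no letter transition is. -/
def Det (T : StratPDA A Γ') : Prop :=
  ∀ (s : T.S) (t : Option Γ'),
    (T.δ s none t).isSome = true → ∀ a : A, T.δ s (some a) t = none

/-- One step of the strategy transducer (same stack convention as for `PDM`). -/
def TStep (T : StratPDA A Γ') (c : T.S × List Γ') (inp out : Option A)
    (c' : T.S × List Γ') : Prop :=
  match c.2 with
  | [] => T.δ c.1 inp none = some (c'.1, c'.2, out)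
  | t :: rest => ∃ γ' : List Γ',
      T.δ c.1 inp (some t) = some (c'.1, γ', out) ∧ c'.2 = γ' ++ rest

/-- A blind one-counter strategy transducer: every transition enabled with counter `0`
is also enabled, with the same effect, with nonzero counter. -/
def Blind (T : StratPDA A Unit) : Prop :=
  ∀ (s : T.S) (inp : Option A) (r : T.S × List Unit × Option A),
    T.δ s inp none = some r → T.δ s inp (some ()) = some (r.1, r.2.1 ++ [()], r.2.2)

/-- A realtime strategy transducer: no transition both reads `ε` and outputs `ε`
(every transition carries a letter, either read or written). -/
def Realtime (T : StratPDA A Γ') : Prop :=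
  ∀ (s : T.S) (t : Option Γ') (r : T.S × List Γ' × Option A),
    T.δ s none t = some r → r.2.2 ≠ none

/-- Stack discipline of a visibly pushdown machine for the letter `a`. -/
def VStk (kind : A → VKind) (a : A) (t : Option Γ') (γ' : List Γ') : Prop :=
  match kind a with
  | VKind.call => ∃ B : Γ', γ' = B :: t.toList
  | VKind.ret => γ' = ([] : List Γ')
  | VKind.intern => γ' = t.toList

/-- A visibly pushdown strategy transducer: every transition carries exactly one letter
(the letter read on input transitions, the letter written on output transitions) and the
stack is used according to the kind of that letter. -/
def Visibly (T : StratPDA A Γ') (kind : A → VKind) : Prop :=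
  (∀ (s : T.S) (a : A) (t : Option Γ') (s' : T.S) (γ' : List Γ') (out : Option A),
      T.δ s (some a) t = some (s', γ', out) → out = none ∧ VStk kind a t γ') ∧
  (∀ (s : T.S) (t : Option Γ') (s' : T.S) (γ' : List Γ') (out : Option A),
      T.δ s none t = some (s', γ', out) → ∃ a : A, out = some a ∧ VStk kind a t γ')

/-- The strategy transducer `T`, playing for Player `i`, is consistent with the play
`(conf, lab)` of the pushdown game on `M`: `T` runs in lockstep with the play, reading
the opponent's moves and outputting Player `i`'s moves. -/
def Consistent (T : StratPDA A Γ') (M : PDM Q A Γ) (owner : Q → Fin 2) (i : Fin 2)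
    (conf : ℕ → PDM.Conf Q Γ) (lab : ℕ → Option A)
    (τ : ℕ → T.S × List Γ') : Prop :=
  τ 0 = (T.sin, []) ∧
  ∀ n : ℕ, T.TStep (τ n) (if owner (conf n).1 = i then none else lab n)
      (if owner (conf n).1 = i then lab n else none) (τ (n + 1))

/-- `T` realizes a winning strategy for Player `i` in the pushdown game on `M` with
partition `owner`, where Player 0 wins an infinite play `conf` iff `W conf` holds:
`T` is deterministic; along every finite `T`-consistent play prefix `T` proposes an
enabled move at positions of Player `i` and can process every enabled move of the
opponent; and every infinite play consistent with `T` is won by Player `i`. -/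
def IsWinningStrat (T : StratPDA A Γ') (M : PDM Q A Γ) (owner : Q → Fin 2)
    (W : (ℕ → PDM.Conf Q Γ) → Prop) (i : Fin 2) : Prop :=
  T.Det ∧
  (∀ (n : ℕ) (conf : ℕ → PDM.Conf Q Γ) (lab : ℕ → Option A) (τ : ℕ → T.S × List Γ'),
    conf 0 = (M.qin, []) → τ 0 = (T.sin, []) →
    (∀ k < n, M.Step (conf k) (lab k) (conf (k + 1))) →
    (∀ k < n, T.TStep (τ k) (if owner (conf k).1 = i then none else lab k)
        (if owner (conf k).1 = i then lab k else none) (τ (k + 1))) →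
    ((owner (conf n).1 = i →
        ∃ (x : Option A) (c' : PDM.Conf Q Γ) (τ' : T.S × List Γ'),
          M.Step (conf n) x c' ∧ T.TStep (τ n) none x τ') ∧
     (owner (conf n).1 ≠ i →
        ∀ (x : Option A) (c' : PDM.Conf Q Γ), M.Step (conf n) x c' →
          ∃ τ' : T.S × List Γ', T.TStep (τ n) x none τ'))) ∧
  (∀ (conf : ℕ → PDM.Conf Q Γ) (lab : ℕ → Option A) (τ : ℕ → T.S × List Γ'),
    PDM.IsPlay M conf lab → T.Consistent M owner i conf lab τ → (W conf ↔ i = 0))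

end StratPDA

/-! Tree automata. -/

/-- Positive Boolean formulas over `X` (with `true` and `false`). -/
inductive PosBool (X : Type) : Type
  | tru | fls
  | var (x : X)
  | and (f g : PosBool X)
  | or (f g : PosBool X)

/-- Satisfaction of a positive Boolean formula by a set of variables. -/
def PosBool.Sat {X : Type} : PosBool X → Set X → Prop
  | .tru, _ => True
  | .fls, _ => False
  | .var x, Y => x ∈ Y
  | .and f g, Y => f.Sat Y ∧ g.Sat Y
  | .or f g, Y => f.Sat Y ∨ g.Sat Y

/-- Navigation directions in a `Γ`-tree: up (to the parent), stay, or down to child `A`.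
Nodes of the full `Γ`-tree are lists over `Γ` with the last chosen direction at the head,
so the child `γ.↓_A` is `A :: γ` and the parent of `A :: γ` is `γ`. -/
inductive TMove (Γ : Type) : Type
  | up | stay
  | down (A : Γ)

def TMove.apply {Γ : Type} : TMove Γ → List Γ → Option (List Γ)
  | .up, [] => none
  | .up, _ :: l => some l
  | .stay, l => some l
  | .down A, l => some (A :: l)

/-- An alternating two-way parity tree automaton over `Sig`-labeled full `Γ`-trees. -/
structure A2TA (Sig Γ : Type) where
  Q : Type
  qin : Q
  δ : Q → Sig → PosBool (TMove Γ × Q)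
  col : Q → ℕ

/-- A run of the A2TA `B` on the `Sig`-labeled full `Γ`-tree `lab`: a tree (over some
branching type `Ξ`, children obtained by consing) whose nodes are labeled by pairs
(state, tree node), rooted at `(q_in, ε)`, such that the successors of every node
satisfy the transition formula. -/
structure A2Run {Sig Γ : Type} (B : A2TA Sig Γ) (lab : List Γ → Sig) where
  Ξ : Type
  tree : Set (List Ξ)
  rlab : List Ξ → B.Q × List Γ
  root_mem : [] ∈ tree
  root_lab : rlab [] = (B.qin, [])
  closed : ∀ (ξ : Ξ) (l : List Ξ), ξ :: l ∈ tree → l ∈ tree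
  trans : ∀ l ∈ tree, ∃ S : Set (TMove Γ × B.Q),
    PosBool.Sat (B.δ (rlab l).1 (lab (rlab l).2)) S ∧
    ∀ dq ∈ S, ∃ γ' : List Γ, TMove.apply dq.1 (rlab l).2 = some γ' ∧
      ∃ ξ : Ξ, ξ :: l ∈ tree ∧ rlab (ξ :: l) = (dq.2, γ')

/-- An infinite path of a run, starting at the root. -/
def A2Run.IsPath {Sig Γ : Type} {B : A2TA Sig Γ} {lab : List Γ → Sig}
    (r : A2Run B lab) (π : ℕ → List r.Ξ) : Prop :=
  π 0 = [] ∧ ∀ n : ℕ, (∃ ξ : r.Ξ, π (n + 1) = ξ :: π n) ∧ π (n + 1) ∈ r.tree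

/-- `B` accepts `lab`: some run is accepting, i.e. on every infinite path the minimal
priority seen infinitely often is even. -/
def A2TA.Accepts {Sig Γ : Type} (B : A2TA Sig Γ) (lab : List Γ → Sig) : Prop :=
  ∃ r : A2Run B lab, ∀ π : ℕ → List r.Ξ, r.IsPath π →
    Even (sInf (B.col '' {q | ∀ n : ℕ, ∃ m, n ≤ m ∧ (r.rlab (π m)).1 = q}))

/-- Stair acceptance for an automaton with the same components (a StA2TA): on every
infinite path the minimal priority seen infinitely often at the `Steps` positions
(positions whose stack/tree-node height is never exceeded from below later) is even. -/
def A2TA.StairAccepts {Sig Γ : Type} (B : A2TA Sig Γ) (lab : List Γ → Sig) : Prop :=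
  ∃ r : A2Run B lab, ∀ π : ℕ → List r.Ξ, r.IsPath π →
    Even (sInf (B.col '' {q | ∀ n : ℕ, ∃ m, n ≤ m ∧
      (∀ m' : ℕ, m ≤ m' → (r.rlab (π m)).2.length ≤ (r.rlab (π m')).2.length) ∧
      (r.rlab (π m)).1 = q}))

/-- A nondeterministic one-way parity tree automaton over `Sig`-labeled full `Γ`-trees. -/
structure N1TA (Sig Γ : Type) where
  Q : Type
  qin : Q
  Δ : Q → Sig → Set (Γ → Q)
  col : Q → ℕ

/-- Acceptance for N1TA: some run (one state per node, top-down) is such that along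
every branch the minimal priority seen infinitely often is even. -/
def N1TA.Accepts {Sig Γ : Type} (E : N1TA Sig Γ) (lab : List Γ → Sig) : Prop :=
  ∃ r : List Γ → E.Q, r [] = E.qin ∧
    (∀ l : List Γ, ∃ f ∈ E.Δ (r l) (lab l), ∀ A : Γ, r (A :: l) = f A) ∧
    ∀ β : ℕ → Γ, Even (sInf (E.col ''
      {q | ∀ n : ℕ, ∃ m, n ≤ m ∧ r (List.ofFn (fun j : Fin m => β j.1)).reverse = q}))


/-- The visibly pushdown alphabet `{c, r, a}` with `c` a call, `r` a return and `a` an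
internal action. -/
inductive CRA : Type
  | c | r | a

def kindCRA : CRA → VKind
  | CRA.c => VKind.call
  | CRA.r => VKind.ret
  | CRA.a => VKind.intern

/-!
A DV1CA has no `ε`-moves and pushes on every `c`, so after reading `cⁿ a` its counter is `n`.
By pigeonhole, `cˢ⁺² a` and `cᵗ⁺² a` with `s < t` lead to the same state. Reading `rˢ` from either
configuration never empties the counter, so the zero test cannot tell them apart and determinism
makes both runs end in the same state. Since `cˢ⁺² a rˢ` is accepted, so is `cᵗ⁺² a rˢ ∉ L`.
-/

namespace PDM

variable {Q A Γ : Type} {M : PDM Q A Γ}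

theorem step_iff {c c' : Conf Q Γ} {a : Option A} :
    M.Step c a c' ↔ ∃ γ', (c'.1, γ') ∈ M.δ c.1 a c.2.head? ∧ c'.2 = γ' ++ c.2.tail := by
  rcases c with ⟨q, _ | ⟨t, rest⟩⟩ <;> simp [Step]

theorem Realtime.not_step_none (hM : M.Realtime) {c c' : Conf Q Γ} : ¬ M.Step c none c' := by
  intro h
  obtain ⟨γ, hγ, -⟩ := step_iff.mp h
  rw [hM] at hγ
  exact hγ

theorem Deterministic.fst_eq_of_step (hM : M.Deterministic) {c d c' d' : Conf Q Γ}
    {a : Option A} (hq : c.1 = d.1) (hhead : c.2.head? = d.2.head?)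
    (hc : M.Step c a c') (hd : M.Step d a d') : c'.1 = d'.1 := by
  obtain ⟨γ, hγ, -⟩ := step_iff.mp hc
  obtain ⟨γ', hγ', -⟩ := step_iff.mp hd
  rw [hq, hhead] at hγ
  exact (Prod.ext_iff.mp ((hM _ _).1 a hγ hγ')).1

/-- `M.Reads c w c'`: reading `w` letter by letter, without `ε`-moves, leads from `c` to `c'`. -/
inductive Reads (M : PDM Q A Γ) : Conf Q Γ → List A → Conf Q Γ → Prop
  | nil (c : Conf Q Γ) : Reads M c [] c
  | cons {c c' c'' : Conf Q Γ} {a : A} {w : List A} :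
      M.Step c (some a) c' → Reads M c' w c'' → Reads M c (a :: w) c''

theorem reads_singleton_iff {c c' : Conf Q Γ} {a : A} :
    M.Reads c [a] c' ↔ M.Step c (some a) c' := by
  constructor
  · rintro (_ | ⟨h, ⟨⟩⟩); exact h
  · exact fun h => .cons h (.nil _)

theorem reads_append_iff {c c'' : Conf Q Γ} {w₁ w₂ : List A} :
    M.Reads c (w₁ ++ w₂) c'' ↔ ∃ c', M.Reads c w₁ c' ∧ M.Reads c' w₂ c'' := by
  induction w₁ generalizing c with
  | nil => exact ⟨fun h => ⟨c, .nil c, h⟩, fun ⟨_, h₁, h₂⟩ => by cases h₁; exact h₂⟩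
  | cons a w ih =>
    constructor
    · rintro (_ | ⟨hs, hr⟩)
      obtain ⟨c', h₁, h₂⟩ := ih.mp hr
      exact ⟨c', .cons hs h₁, h₂⟩
    · rintro ⟨c', _ | ⟨hs, h₁⟩, h₂⟩
      exact .cons hs (ih.mpr ⟨c', h₁, h₂⟩)

theorem Reads.exists_steps {c c' : Conf Q Γ} {w : List A} (h : M.Reads c w c') :
    ∃ ρ : ℕ → Conf Q Γ, ρ 0 = c ∧ ρ w.length = c' ∧
      ∀ k < w.length, M.Step (ρ k) w[k]? (ρ (k + 1)) := by
  induction h with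
  | nil c => exact ⟨fun _ => c, rfl, rfl, by simp⟩
  | @cons c _ _ _ _ hs _ ih =>
    obtain ⟨ρ, h0, hlen, hsteps⟩ := ih
    refine ⟨fun k => if k = 0 then c else ρ (k - 1), by simp, by simpa using hlen, ?_⟩
    rintro (_ | k) hk
    · simpa [h0] using hs
    · simpa using hsteps k (by simpa using hk)

theorem acceptsFin_iff_exists_reads (hM : M.Realtime) {F : Set Q} {w : List A} :
    M.AcceptsFin F w ↔ ∃ c, M.Reads (M.qin, []) w c ∧ c.1 ∈ F := by
  constructor
  · rintro ⟨m, ρ, u, h0, hsteps, rfl, hF⟩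
    refine ⟨ρ m, ?_, hF⟩
    suffices ∀ k ≤ m, M.Reads (ρ 0) (List.ofFn fun i : Fin k => u i).reduceOption (ρ k) by
      simpa [h0] using this m le_rfl
    intro k
    induction k with
    | zero => exact fun _ => .nil _
    | succ k ih =>
      intro hk
      obtain ⟨a, hu⟩ : ∃ a, u k = some a := by
        cases hu : u k with
        | none => exact absurd (hu ▸ hsteps k hk) hM.not_step_none
        | some a => exact ⟨a, rfl⟩
      rw [List.ofFn_succ_last, List.reduceOption_append]
      refine reads_append_iff.mpr ⟨ρ k, ih (by omega), ?_⟩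
      simpa [hu, reads_singleton_iff] using hsteps k hk
  · rintro ⟨c, hw, hF⟩
    obtain ⟨ρ, h0, hlen, hsteps⟩ := hw.exists_steps
    refine ⟨w.length, ρ, fun k => w[k]?, h0, hsteps, ?_, hlen ▸ hF⟩
    simp [List.reduceOption]

section Visibly

variable {kind : A → VKind} {a : A} {c c' : Conf Q Γ}

theorem Visibly.realtime (hM : M.Visibly kind) : M.Realtime := hM.1

theorem Visibly.length_of_step_call (hM : M.Visibly kind) (ha : kind a = .call)
    (h : M.Step c (some a) c') : c'.2.length = c.2.length + 1 := by
  obtain ⟨mv, hmv⟩ := hM.2.1 c.1 a ha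
  obtain ⟨γ, hγ, hc'⟩ := step_iff.mp h
  obtain ⟨p, -, hp⟩ := (hmv _).le hγ
  simp only [Prod.mk.injEq] at hp
  obtain ⟨-, rfl⟩ := hp
  rw [hc']
  rcases c with ⟨q, _ | ⟨t, rest⟩⟩ <;> simp

theorem Visibly.length_of_step_intern (hM : M.Visibly kind) (ha : kind a = .intern)
    (h : M.Step c (some a) c') : c'.2.length = c.2.length := by
  obtain ⟨mv, hmv⟩ := hM.2.2.2 c.1 a ha
  obtain ⟨γ, hγ, hc'⟩ := step_iff.mp h
  obtain ⟨p, -, hp⟩ := (hmv _).le hγ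
  simp only [Prod.mk.injEq] at hp
  obtain ⟨-, rfl⟩ := hp
  rw [hc']
  rcases c with ⟨q, _ | ⟨t, rest⟩⟩ <;> simp

theorem Visibly.length_of_step_ret (hM : M.Visibly kind) (ha : kind a = .ret)
    (h : M.Step c (some a) c') : c'.2.length = c.2.length - 1 := by
  obtain ⟨γ, hγ, hc'⟩ := step_iff.mp h
  have hγ_nil : γ = [] := hM.2.2.1 _ _ _ ha _ hγ
  rw [hc', hγ_nil]
  simp

theorem Visibly.length_sub_one_le_of_step (hM : M.Visibly kind)
    (h : M.Step c (some a) c') : c.2.length - 1 ≤ c'.2.length := by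
  cases ha : kind a
  · rw [hM.length_of_step_call ha h]; omega
  · rw [hM.length_of_step_ret ha h]
  · rw [hM.length_of_step_intern ha h]; omega

theorem Visibly.length_of_reads_replicate_call (hM : M.Visibly kind) (ha : kind a = .call)
    {n : ℕ} (h : M.Reads c (List.replicate n a) c') : c'.2.length = c.2.length + n := by
  induction n generalizing c with
  | zero => cases h; rfl
  | succ n ih =>
    obtain _ | ⟨hs, hr⟩ := h
    rw [ih hr, hM.length_of_step_call ha hs]
    omega

end Visibly

/-- The counter drops by at most one per letter, so it stays positive while reading `w` from a
counter `≥ |w|`: the zero test never fires and the machine runs like a finite automaton. -/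
theorem Deterministic.fst_eq_of_reads_of_length_le {M : PDM Q A Unit} {kind : A → VKind}
    (hdet : M.Deterministic) (hvis : M.Visibly kind) {c d c' d' : Conf Q Unit} {w : List A}
    (hq : c.1 = d.1) (hc : w.length ≤ c.2.length) (hd : w.length ≤ d.2.length)
    (hcw : M.Reads c w c') (hdw : M.Reads d w d') : c'.1 = d'.1 := by
  induction hcw generalizing d with
  | nil => cases hdw; exact hq
  | @cons c _ _ _ _ hs _ ih =>
    obtain _ | ⟨hs', hr'⟩ := hdw
    simp only [List.length_cons] at hc hd
    have head_eq : ∀ l : List Unit, 0 < l.length → l.head? = some () := by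
      rintro (_ | ⟨⟨⟩, _⟩) h <;> simp_all
    have hhead : c.2.head? = d.2.head? := by
      rw [head_eq _ (by omega), head_eq _ (by omega)]
    have := hvis.length_sub_one_le_of_step hs
    have := hvis.length_sub_one_le_of_step hs'
    exact ih (hdet.fst_eq_of_step hq hhead hs hs') (by omega) (by omega) hr'

end PDM

def cnar (n m : ℕ) : List CRA := List.replicate n CRA.c ++ [CRA.a] ++ List.replicate m CRA.r

theorem cnar_inj {n m n' m' : ℕ} (h : cnar n m = cnar n' m') : n = n' ∧ m = m' := by
  induction n generalizing n' <;> cases n' <;> simp_all [cnar, List.replicate_succ]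

theorem cnar_add_two_mem_iff {s t : ℕ} :
    (∃ n : ℕ, 2 ≤ n ∧ cnar (t + 2) s =
      List.replicate n CRA.c ++ [CRA.a] ++ List.replicate (n - 2) CRA.r) ↔ s = t := by
  refine ⟨fun ⟨n, _, hn⟩ => ?_, fun h => ⟨t + 2, by omega, by rw [h]; rfl⟩⟩
  obtain ⟨rfl, rfl⟩ := cnar_inj hn
  omega

/-- The language `L = {cⁿ a r^(n-2) | n ≥ 2}` is not accepted by any
deterministic visibly one-counter automaton. -/
theorem cnarn_not_visibly_one_counter :
    ¬ ∃ (Q : Type) (_ : Finite Q) (M : PDM Q CRA Unit) (F : Set Q),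
        M.Deterministic ∧ M.Visibly kindCRA ∧
        {w : List CRA | PDM.AcceptsFin M F w} =
          {w : List CRA | ∃ n : ℕ, 2 ≤ n ∧
            w = List.replicate n CRA.c ++ [CRA.a] ++ List.replicate (n - 2) CRA.r} := by
  rintro ⟨Q, _, M, F, det, vis, hL⟩
  have accepts_iff : ∀ t s, M.AcceptsFin F (cnar (t + 2) s) ↔ s = t :=
    fun _ _ => (Set.ext_iff.mp hL _).trans cnar_add_two_mem_iff
  have runs : ∀ t, ∃ p e, M.Reads (M.qin, []) (List.replicate (t + 2) CRA.c ++ [CRA.a]) p ∧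
      M.Reads p (List.replicate t CRA.r) e ∧ e.1 ∈ F := by
    intro t
    obtain ⟨e, he, hF⟩ :=
      (PDM.acceptsFin_iff_exists_reads vis.realtime).mp ((accepts_iff t t).mpr rfl)
    obtain ⟨p, hp, hpe⟩ := PDM.reads_append_iff.mp he
    exact ⟨p, e, hp, hpe, hF⟩
  choose p e hp he hF using runs
  have height : ∀ t, (p t).2.length = t + 2 := by
    intro t
    obtain ⟨q, hq, hqp⟩ := PDM.reads_append_iff.mp (hp t)
    rw [vis.length_of_step_intern rfl (PDM.reads_singleton_iff.mp hqp),
      vis.length_of_reads_replicate_call rfl hq, List.length_nil, zero_add]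
  obtain ⟨s, t, hne, hst⟩ := Finite.exists_ne_map_eq_of_infinite fun t => (p t).1
  wlog hlt : s < t generalizing s t
  · exact this t s hne.symm hst.symm (by omega)
  have het : M.Reads (p t) (List.replicate s CRA.r ++ List.replicate (t - s) CRA.r) (e t) := by
    rw [← List.replicate_add, Nat.add_sub_cancel' hlt.le]
    exact he t
  obtain ⟨e', he', -⟩ := PDM.reads_append_iff.mp het
  have hfinal : (e s).1 = e'.1 :=
    det.fst_eq_of_reads_of_length_le vis hst (by simp [height]) (by simp [height]; omega) (he s) he'
  have : M.AcceptsFin F (cnar (t + 2) s) := (PDM.acceptsFin_iff_exists_reads vis.realtime).mpr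
    ⟨e', PDM.reads_append_iff.mpr ⟨p t, hp t, he'⟩, hfinal ▸ hF s⟩
  exact hlt.ne ((accepts_iff t s).mp this)
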